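/- Let (L, β) be a monoidal Hom-algebra in a Hom-Yetter-Drinfeld category over a field of characteristic ≠ 2, and let x ∈ L be H-invariant and β-invariant with ad_x²(L) = 0. Then ad_x(l)·(z·ad_x(m)) = 0 for all l, m, z ∈ L. -/
import Mathlib


variable {k H L : Type*} [Field k] [AddCommGroup L] [Module k L]

/-- The adjoint map `ad_x(y) = xy − yx`. -/
def adj (mul : L → L → L) (x y : L) : L := mul x y - mul y x

/-- Lemma 3.5 (2): over a field of characteristic `≠ 2`, if `x` is an
`H`-invariant, `β`-invariant element with `ad_x²(L) = 0`, then
`ad_x(l)·(z·ad_x(m)) = 0` for all `l, m, z ∈ L`. -/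
theorem ad_annihilates
    (hchar : (2 : k) ≠ 0)
    (mul : L → L → L) (one : L) (β : L ≃ₗ[k] L)
    (hassoc : ∀ a b c, mul (β a) (mul b c) = mul (mul a b) (β c))
    (hbmul : ∀ a b, β (mul a b) = mul (β a) (β b))
    (honel : ∀ a, mul one a = β a)
    (honer : ∀ a, mul a one = β a)
    (hbone : β one = one)
    (act : H → L → L) (eps : H → k)
    (x : L)
    (hx0 : ∀ h : H, act h x = eps h • x)
    (hbx : β x = x)
    (hLeib : ∀ y z, adj mul x (mul y z) =
      mul (adj mul x y) (β z) + mul (β y) (adj mul x z))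
    (hadb : ∀ y, adj mul x (β y) = β (adj mul x y))
    (hLeib2 : ∀ y z, adj mul x (adj mul x (mul y z)) =
      mul (adj mul x (adj mul x y)) (β (β z)) +
        2 • β (mul (adj mul x y) (adj mul x z)) +
        mul (β (β y)) (adj mul x (adj mul x z)))
    (hzero : ∀ l : L, adj mul x (adj mul x l) = 0) :
    ∀ l m z : L, mul (adj mul x l) (mul z (adj mul x m)) = 0 := by
  -- helper: 2 • v = 0 → v = 0
  have h2 : ∀ v : L, 2 • v = 0 → v = 0 := by
    intro v hv
    have h' : (2:k) • v = 0 := by rw [two_smul, ← two_nsmul]; exact hv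
    rcases smul_eq_zero.mp h' with h | h
    · exact absurd h hchar
    · exact h
  have hAx : adj mul x x = 0 := sub_self _
  have hAbinv : ∀ y, adj mul x (β.symm y) = β.symm (adj mul x y) := by
    intro y
    have h := hadb (β.symm y)
    rw [β.apply_symm_apply] at h
    exact (β.symm_apply_eq.mpr h).symm
  -- β commutes with mul 0 · and mul · 0
  have hcβ : ∀ w, mul 0 (β w) = β (mul 0 w) := by
    intro w
    have h := hbmul 0 w
    rw [map_zero] at h
    exact h.symm
  have hdβ : ∀ w, mul (β w) 0 = β (mul w 0) := by
    intro w
    have h := hbmul w 0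
    rw [map_zero] at h
    exact h.symm
  -- main consequence of hLeib2
  have M : ∀ y z, mul 0 (β (β z)) + 2 • β (mul (adj mul x y) (adj mul x z))
      + mul (β (β y)) 0 = 0 := by
    intro y z
    have h := hLeib2 y z
    simp only [hzero] at h
    exact h.symm
  have M1 : ∀ z, mul 0 (β (β z)) + 2 • β (mul 0 (adj mul x z)) + mul x 0 = 0 := by
    intro z
    have h := M x z
    rw [hAx, hbx, hbx] at h
    exact h
  have M0 : mul 0 x + 2 • β (mul 0 0) + mul x 0 = 0 := by
    have h := M1 x
    rw [hAx, hbx, hbx] at h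
    exact h
  have Eq1 : ∀ z, mul 0 (β (adj mul x z)) = mul 0 x := by
    intro z
    have h := M1 (β.symm (adj mul x z))
    rw [hAbinv, hzero, map_zero, β.apply_symm_apply] at h
    exact add_right_cancel (add_right_cancel (h.trans M0.symm))
  -- mul 0 · is constant
  have hcK : ∀ u, mul 0 u = -(2 • mul 0 x + mul x 0) := by
    intro u
    have h := M1 (β.symm (β.symm u))
    rw [β.apply_symm_apply, β.apply_symm_apply, ← hcβ, Eq1] at h
    rw [add_assoc] at h
    exact eq_neg_of_add_eq_zero_left h
  have hcc : ∀ u, mul 0 u = mul 0 0 := fun u => (hcK u).trans (hcK 0).symm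
  -- derive mul x 0 = -(3 • κ) where κ = mul 0 0
  have hdx : mul x 0 = -(3 • mul 0 0) := by
    have h := hcK 0
    rw [hcc x] at h
    linear_combination (norm := module) h
  -- βκ = κ
  have hβκ : β (mul 0 0) = mul 0 0 := by
    have h := M0
    rw [hcc x, hdx] at h
    have h' : β (mul 0 0) - mul 0 0 = 0 :=
      h2 _ (by linear_combination (norm := module) h)
    exact sub_eq_zero.mp h'
  have hβκ' : β.symm (mul 0 0) = mul 0 0 := β.symm_apply_eq.mpr hβκ.symm
  -- symmetric side
  have M2 : ∀ y, mul 0 x + 2 • β (mul (adj mul x y) 0) + mul (β (β y)) 0 = 0 := by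
    intro y
    have h := M y x
    rw [hAx, hbx, hbx] at h
    exact h
  have Eq2 : ∀ y, mul (adj mul x y) 0 = -(3 • mul 0 0) := by
    intro y
    have h := M2 (β.symm (adj mul x y))
    rw [hAbinv, hzero, map_zero, β.apply_symm_apply, hdβ, hcc x, hβκ] at h
    -- h : κ + 2 • κ + β (mul (adj mul x y) 0) = 0
    have h' : β (mul (adj mul x y) 0) = -(3 • mul 0 0) := by
      linear_combination (norm := module) h
    have := β.symm_apply_eq.mpr h'.symm
    rw [map_neg, map_nsmul, hβκ'] at this
    exact this.symm
  have hdK : ∀ u, mul u 0 = 5 • mul 0 0 := by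
    intro u
    have h := M2 (β.symm (β.symm u))
    rw [β.apply_symm_apply, β.apply_symm_apply, Eq2, hcc x] at h
    rw [map_neg, map_nsmul, hβκ] at h
    linear_combination (norm := module) h
  -- κ = 0
  have hκ : mul 0 0 = 0 := by
    have h := hdK 0
    have h4 : (4:k) • mul 0 0 = 0 := by
      linear_combination (norm := module) (-1:k) • h
    rcases smul_eq_zero.mp h4 with h' | h'
    · exfalso
      have : (4:k) = 2 * 2 := by norm_num
      exact mul_ne_zero hchar hchar (this ▸ h')
    · exact h'
  have hc0 : ∀ u, mul 0 u = 0 := fun u => (hcc u).trans hκ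
  have hd0 : ∀ u, mul u 0 = 0 := by
    intro u
    rw [hdK u, hκ, smul_zero]
  -- products of two adjoints vanish
  have hP : ∀ y z, mul (adj mul x y) (adj mul x z) = 0 := by
    intro y z
    have h := M y z
    rw [hc0, hd0, zero_add, add_zero] at h
    have := h2 _ h
    exact β.map_eq_zero_iff.mp this
  -- final computation
  intro l m z
  set p := adj mul x (β.symm (β.symm l)) with hp
  set q := β.symm z with hq
  have hβp : β p = adj mul x (β.symm l) := by
    rw [hp, ← hadb, β.apply_symm_apply]
  have hββp : β (β p) = adj mul x l := by
    rw [hβp, ← hadb, β.apply_symm_apply]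
  have hAp : adj mul x p = 0 := hzero _
  have h1 : adj mul x (mul p q) = 0 := by
    rw [hLeib, hAp, hc0, zero_add, hβp, hq, hAbinv, ← hAbinv, hP]
  have h3 : adj mul x (mul (β p) (mul q m)) = 0 := by
    rw [hLeib, hadb, hAp, map_zero, hc0, zero_add, hββp, hP]
  have h4 := hLeib (mul p q) (β m)
  rw [← hassoc p q m, h3, h1, hc0, zero_add] at h4
  -- h4 : 0 = mul (β (mul p q)) (adj mul x (β m))
  have h5 : mul (mul (adj mul x (β.symm l)) z) (β (adj mul x m)) = 0 := by
    have := h4.symm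
    rw [hbmul, hβp, hq, β.apply_symm_apply, hadb] at this
    exact this
  have h6 := hassoc (adj mul x (β.symm l)) z (adj mul x m)
  rw [← hadb, β.apply_symm_apply] at h6
  rw [h6, h5]
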